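/- Let n = 6m for a positive integer m, and let i be an integer with 1 ≤ i < m/2. Then the three subsets S1 = {0, i, m+i, 2m+i, 3m}, S2 = {0, i, m, 2m, 3m+i}, and S3 = {0, m-i, m, 2m, 4m-i} of Z_n are pairwise homometric 5-element subsets. (This is the Type E family of homometric triples.) -/
import Mathlib


/-- The cyclic (Lee) distance on `ZMod n`: `d(a,b) = min(|a-b|, n-|a-b|)`. -/
def cycDist (n : ℕ) (a b : ZMod n) : ℕ := min (a - b).val (b - a).val

/-- The multiset of pairwise cyclic distances of a finite subset of `ZMod n`,
taken over unordered pairs of distinct elements. -/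
def distMultiset (n : ℕ) (S : Finset (ZMod n)) : Multiset ℕ :=
  (S.sym2.filter (fun p => ¬ p.IsDiag)).val.map
    (Sym2.lift ⟨fun a b => cycDist n a b, fun a b => by
      simp only [cycDist]; exact min_comm _ _⟩)

/-- Two subsets of `ZMod n` are homometric if they have the same multiset of
pairwise cyclic distances. -/
def Homometric (n : ℕ) (S T : Finset (ZMod n)) : Prop :=
  distMultiset n S = distMultiset n T

lemma cast_ne (n a b : ℕ) (ha : a < n) (hb : b < n) (h : a ≠ b) :
    (a : ZMod n) ≠ (b : ZMod n) := fun he => h (by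
  have := congrArg ZMod.val he
  rwa [ZMod.val_cast_of_lt ha, ZMod.val_cast_of_lt hb] at this)

lemma cycDist_lt (n a b : ℕ) [NeZero n] (hab : a < b) (hb : b < n) :
    cycDist n (a : ZMod n) (b : ZMod n) = min (n - (b - a)) (b - a) := by
  have ha : a < n := lt_trans hab hb
  have hval : ∀ x : ℕ, x < n → ((x : ZMod n)).val = x := fun x hx => ZMod.val_cast_of_lt hx
  have h1 : ((b : ZMod n) - a).val = b - a := by
    rw [ZMod.val_sub (by rw [hval a ha, hval b hb]; omega), hval a ha, hval b hb]
  have h2 : ((a : ZMod n) - b).val = n - (b - a) := by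
    have : (a : ZMod n) - b = -((b : ZMod n) - a) := by ring
    rw [this, ZMod.neg_val, h1]
    have hne : (b : ZMod n) - (a : ZMod n) ≠ 0 := by
      intro h0
      have := congrArg ZMod.val h0
      rw [h1, ZMod.val_zero] at this
      omega
    simp [hne]
  rw [cycDist, h1, h2]

lemma distMultiset_five (n : ℕ) (a b c d e : ZMod n)
    (hab : a ≠ b) (hac : a ≠ c) (had : a ≠ d) (hae : a ≠ e)
    (hbc : b ≠ c) (hbd : b ≠ d) (hbe : b ≠ e)
    (hcd : c ≠ d) (hce : c ≠ e) (hde : d ≠ e) :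
    distMultiset n {a, b, c, d, e} =
      {cycDist n a b, cycDist n a c, cycDist n a d, cycDist n a e,
       cycDist n b c, cycDist n b d, cycDist n b e,
       cycDist n c d, cycDist n c e, cycDist n d e} := by
  have hval : ({a, b, c, d, e} : Finset (ZMod n)).val = a ::ₘ b ::ₘ c ::ₘ d ::ₘ {e} := by
    rw [show ({a,b,c,d,e} : Finset (ZMod n)) = insert a (insert b (insert c (insert d {e}))) from rfl]
    rw [Finset.insert_val_of_notMem (by simp [hab, hac, had, hae]),
        Finset.insert_val_of_notMem (by simp [hbc, hbd, hbe]),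
        Finset.insert_val_of_notMem (by simp [hcd, hce]),
        Finset.insert_val_of_notMem (by simp [hde])]
    rfl
  have hsym : ({a,b,c,d,e} : Finset (ZMod n)).sym2.val = (({a,b,c,d,e} : Finset (ZMod n)).val).sym2 := rfl
  simp only [distMultiset, Finset.filter_val, hsym, hval]
  simp [Multiset.sym2_cons, Multiset.filter_cons, hab, hac, had, hae, hbc, hbd, hbe, hcd, hce, hde,
    Multiset.filter_map]
  have h0 : Multiset.filter (fun p => ¬p.IsDiag) ({e} : Multiset (ZMod n)).sym2 = 0 := by
    rw [show ({e} : Multiset (ZMod n)).sym2 = s(e, e) ::ₘ 0 from rfl,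
      Multiset.filter_cons_of_neg _ (by simp), Multiset.filter_zero]
  rw [h0]
  simp only [Multiset.map_zero, ← Multiset.singleton_add, zero_add, add_zero]
  ac_rfl

lemma card_five {α : Type*} [DecidableEq α] (a b c d e : α)
    (hab : a ≠ b) (hac : a ≠ c) (had : a ≠ d) (hae : a ≠ e)
    (hbc : b ≠ c) (hbd : b ≠ d) (hbe : b ≠ e)
    (hcd : c ≠ d) (hce : c ≠ e) (hde : d ≠ e) :
    ({a, b, c, d, e} : Finset α).card = 5 := by
  rw [show ({a,b,c,d,e} : Finset α) = insert a (insert b (insert c (insert d {e}))) from rfl,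
    Finset.card_insert_of_notMem (by simp [hab, hac, had, hae]),
    Finset.card_insert_of_notMem (by simp [hbc, hbd, hbe]),
    Finset.card_insert_of_notMem (by simp [hcd, hce]),
    Finset.card_insert_of_notMem (by simp [hde]), Finset.card_singleton]

set_option maxHeartbeats 1000000 in
theorem typeE_homometric_triple (m i : ℕ) (hi1 : 1 ≤ i) (hi2 : 2 * i < m) :
    ({0, (i : ZMod (6 * m)), (m : ZMod (6 * m)) + i,
        ((2 * m : ℕ) : ZMod (6 * m)) + i, ((3 * m : ℕ) : ZMod (6 * m))} :
          Finset (ZMod (6 * m))).card = 5 ∧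
    ({0, (i : ZMod (6 * m)), (m : ZMod (6 * m)), ((2 * m : ℕ) : ZMod (6 * m)),
        ((3 * m : ℕ) : ZMod (6 * m)) + i} : Finset (ZMod (6 * m))).card = 5 ∧
    ({0, (m : ZMod (6 * m)) - i, (m : ZMod (6 * m)), ((2 * m : ℕ) : ZMod (6 * m)),
        ((4 * m : ℕ) : ZMod (6 * m)) - i} : Finset (ZMod (6 * m))).card = 5 ∧
    Homometric (6 * m)
      ({0, (i : ZMod (6 * m)), (m : ZMod (6 * m)) + i,
        ((2 * m : ℕ) : ZMod (6 * m)) + i, ((3 * m : ℕ) : ZMod (6 * m))} :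
          Finset (ZMod (6 * m)))
      ({0, (i : ZMod (6 * m)), (m : ZMod (6 * m)), ((2 * m : ℕ) : ZMod (6 * m)),
        ((3 * m : ℕ) : ZMod (6 * m)) + i} : Finset (ZMod (6 * m))) ∧
    Homometric (6 * m)
      ({0, (i : ZMod (6 * m)), (m : ZMod (6 * m)), ((2 * m : ℕ) : ZMod (6 * m)),
        ((3 * m : ℕ) : ZMod (6 * m)) + i} : Finset (ZMod (6 * m)))
      ({0, (m : ZMod (6 * m)) - i, (m : ZMod (6 * m)), ((2 * m : ℕ) : ZMod (6 * m)),
        ((4 * m : ℕ) : ZMod (6 * m)) - i} : Finset (ZMod (6 * m))) ∧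
    Homometric (6 * m)
      ({0, (i : ZMod (6 * m)), (m : ZMod (6 * m)) + i,
        ((2 * m : ℕ) : ZMod (6 * m)) + i, ((3 * m : ℕ) : ZMod (6 * m))} :
          Finset (ZMod (6 * m)))
      ({0, (m : ZMod (6 * m)) - i, (m : ZMod (6 * m)), ((2 * m : ℕ) : ZMod (6 * m)),
        ((4 * m : ℕ) : ZMod (6 * m)) - i} : Finset (ZMod (6 * m))) := by
  haveI : NeZero (6 * m) := ⟨by omega⟩
  have hS1 : ({0, (i : ZMod (6 * m)), (m : ZMod (6 * m)) + i,
      ((2 * m : ℕ) : ZMod (6 * m)) + i, ((3 * m : ℕ) : ZMod (6 * m))} : Finset (ZMod (6 * m))) =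
      {((0 : ℕ) : ZMod (6 * m)), ((i : ℕ) : ZMod (6 * m)), ((m + i : ℕ) : ZMod (6 * m)), ((2 * m + i : ℕ) : ZMod (6 * m)), ((3 * m : ℕ) : ZMod (6 * m))} := by
    push_cast; ring_nf
  have hS2 : ({0, (i : ZMod (6 * m)), (m : ZMod (6 * m)), ((2 * m : ℕ) : ZMod (6 * m)),
      ((3 * m : ℕ) : ZMod (6 * m)) + i} : Finset (ZMod (6 * m))) =
      {((0 : ℕ) : ZMod (6 * m)), ((i : ℕ) : ZMod (6 * m)), ((m : ℕ) : ZMod (6 * m)), ((2 * m : ℕ) : ZMod (6 * m)), ((3 * m + i : ℕ) : ZMod (6 * m))} := by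
    push_cast; ring_nf
  have hS3 : ({0, (m : ZMod (6 * m)) - i, (m : ZMod (6 * m)), ((2 * m : ℕ) : ZMod (6 * m)),
      ((4 * m : ℕ) : ZMod (6 * m)) - i} : Finset (ZMod (6 * m))) =
      {((0 : ℕ) : ZMod (6 * m)), ((m - i : ℕ) : ZMod (6 * m)), ((m : ℕ) : ZMod (6 * m)), ((2 * m : ℕ) : ZMod (6 * m)), ((4 * m - i : ℕ) : ZMod (6 * m))} := by
    rw [Nat.cast_sub (by omega : i ≤ m), Nat.cast_sub (by omega : i ≤ 4 * m)]
    push_cast; ring_nf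
  have eA : distMultiset (6 * m) {((0 : ℕ) : ZMod (6 * m)), ((i : ℕ) : ZMod (6 * m)), ((m + i : ℕ) : ZMod (6 * m)), ((2 * m + i : ℕ) : ZMod (6 * m)), ((3 * m : ℕ) : ZMod (6 * m))} = ({i, m + i, 2 * m + i, 3 * m, m, 2 * m, 3 * m - i, m, 2 * m - i, m - i} : Multiset ℕ) := by
    rw [distMultiset_five (6 * m) _ _ _ _ _ (cast_ne (6 * m) (0) (i) (by omega) (by omega) (by omega)) (cast_ne (6 * m) (0) (m + i) (by omega) (by omega) (by omega)) (cast_ne (6 * m) (0) (2 * m + i) (by omega) (by omega) (by omega)) (cast_ne (6 * m) (0) (3 * m) (by omega) (by omega) (by omega)) (cast_ne (6 * m) (i) (m + i) (by omega) (by omega) (by omega)) (cast_ne (6 * m) (i) (2 * m + i) (by omega) (by omega) (by omega)) (cast_ne (6 * m) (i) (3 * m) (by omega) (by omega) (by omega)) (cast_ne (6 * m) (m + i) (2 * m + i) (by omega) (by omega) (by omega)) (cast_ne (6 * m) (m + i) (3 * m) (by omega) (by omega) (by omega)) (cast_ne (6 * m) (2 * m + i) (3 * m) (by omega) (by omega)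 (by omega))]
    rw [cycDist_lt (6 * m) (0) (i) (by omega) (by omega),
      cycDist_lt (6 * m) (0) (m + i) (by omega) (by omega),
      cycDist_lt (6 * m) (0) (2 * m + i) (by omega) (by omega),
      cycDist_lt (6 * m) (0) (3 * m) (by omega) (by omega),
      cycDist_lt (6 * m) (i) (m + i) (by omega) (by omega),
      cycDist_lt (6 * m) (i) (2 * m + i) (by omega) (by omega),
      cycDist_lt (6 * m) (i) (3 * m) (by omega) (by omega),
      cycDist_lt (6 * m) (m + i) (2 * m + i) (by omega) (by omega),
      cycDist_lt (6 * m) (m + i) (3 * m) (by omega) (by omega),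
      cycDist_lt (6 * m) (2 * m + i) (3 * m) (by omega) (by omega)]
    have h0 : min (6 * m - ((i) - (0))) ((i) - (0)) = i := by omega
    have h1 : min (6 * m - ((m + i) - (0))) ((m + i) - (0)) = m + i := by omega
    have h2 : min (6 * m - ((2 * m + i) - (0))) ((2 * m + i) - (0)) = 2 * m + i := by omega
    have h3 : min (6 * m - ((3 * m) - (0))) ((3 * m) - (0)) = 3 * m := by omega
    have h4 : min (6 * m - ((m + i) - (i))) ((m + i) - (i)) = m := by omega
    have h5 : min (6 * m - ((2 * m + i) - (i))) ((2 * m + i) - (i)) = 2 * m := by omega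
    have h6 : min (6 * m - ((3 * m) - (i))) ((3 * m) - (i)) = 3 * m - i := by omega
    have h7 : min (6 * m - ((2 * m + i) - (m + i))) ((2 * m + i) - (m + i)) = m := by omega
    have h8 : min (6 * m - ((3 * m) - (m + i))) ((3 * m) - (m + i)) = 2 * m - i := by omega
    have h9 : min (6 * m - ((3 * m) - (2 * m + i))) ((3 * m) - (2 * m + i)) = m - i := by omega
    rw [h0, h1, h2, h3, h4, h5, h6, h7, h8, h9]
  have eB : distMultiset (6 * m) {((0 : ℕ) : ZMod (6 * m)), ((i : ℕ) : ZMod (6 * m)), ((m : ℕ) : ZMod (6 * m)), ((2 * m : ℕ) : ZMod (6 * m)), ((3 * m + i : ℕ) : ZMod (6 * m))} = ({i, m, 2 * m, 3 * m - i, m - i, 2 * m - i, 3 * m, m, 2 * m + i, m + i} : Multiset ℕ) := by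
    rw [distMultiset_five (6 * m) _ _ _ _ _ (cast_ne (6 * m) (0) (i) (by omega) (by omega) (by omega)) (cast_ne (6 * m) (0) (m) (by omega) (by omega) (by omega)) (cast_ne (6 * m) (0) (2 * m) (by omega) (by omega) (by omega)) (cast_ne (6 * m) (0) (3 * m + i) (by omega) (by omega) (by omega)) (cast_ne (6 * m) (i) (m) (by omega) (by omega) (by omega)) (cast_ne (6 * m) (i) (2 * m) (by omega) (by omega) (by omega)) (cast_ne (6 * m) (i) (3 * m + i) (by omega) (by omega) (by omega)) (cast_ne (6 * m) (m) (2 * m) (by omega) (by omega) (by omega)) (cast_ne (6 * m) (m) (3 * m + i) (by omega) (by omega) (by omega)) (cast_ne (6 * m) (2 * m) (3 * m + i) (by omega) (by omega) (by omega))]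
    rw [cycDist_lt (6 * m) (0) (i) (by omega) (by omega),
      cycDist_lt (6 * m) (0) (m) (by omega) (by omega),
      cycDist_lt (6 * m) (0) (2 * m) (by omega) (by omega),
      cycDist_lt (6 * m) (0) (3 * m + i) (by omega) (by omega),
      cycDist_lt (6 * m) (i) (m) (by omega) (by omega),
      cycDist_lt (6 * m) (i) (2 * m) (by omega) (by omega),
      cycDist_lt (6 * m) (i) (3 * m + i) (by omega) (by omega),
      cycDist_lt (6 * m) (m) (2 * m) (by omega) (by omega),
      cycDist_lt (6 * m) (m) (3 * m + i) (by omega) (by omega),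
      cycDist_lt (6 * m) (2 * m) (3 * m + i) (by omega) (by omega)]
    have h10 : min (6 * m - ((i) - (0))) ((i) - (0)) = i := by omega
    have h11 : min (6 * m - ((m) - (0))) ((m) - (0)) = m := by omega
    have h12 : min (6 * m - ((2 * m) - (0))) ((2 * m) - (0)) = 2 * m := by omega
    have h13 : min (6 * m - ((3 * m + i) - (0))) ((3 * m + i) - (0)) = 3 * m - i := by omega
    have h14 : min (6 * m - ((m) - (i))) ((m) - (i)) = m - i := by omega
    have h15 : min (6 * m - ((2 * m) - (i))) ((2 * m) - (i)) = 2 * m - i := by omega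
    have h16 : min (6 * m - ((3 * m + i) - (i))) ((3 * m + i) - (i)) = 3 * m := by omega
    have h17 : min (6 * m - ((2 * m) - (m))) ((2 * m) - (m)) = m := by omega
    have h18 : min (6 * m - ((3 * m + i) - (m))) ((3 * m + i) - (m)) = 2 * m + i := by omega
    have h19 : min (6 * m - ((3 * m + i) - (2 * m))) ((3 * m + i) - (2 * m)) = m + i := by omega
    rw [h10, h11, h12, h13, h14, h15, h16, h17, h18, h19]
  have eC : distMultiset (6 * m) {((0 : ℕ) : ZMod (6 * m)), ((m - i : ℕ) : ZMod (6 * m)), ((m : ℕ) : ZMod (6 * m)), ((2 * m : ℕ) : ZMod (6 * m)), ((4 * m - i : ℕ) : ZMod (6 * m))} = ({m - i, m, 2 * m, 2 * m + i, i, m + i, 3 * m, m, 3 * m - i, 2 * m - i} : Multiset ℕ) := by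
    rw [distMultiset_five (6 * m) _ _ _ _ _ (cast_ne (6 * m) (0) (m - i) (by omega) (by omega) (by omega)) (cast_ne (6 * m) (0) (m) (by omega) (by omega) (by omega)) (cast_ne (6 * m) (0) (2 * m) (by omega) (by omega) (by omega)) (cast_ne (6 * m) (0) (4 * m - i) (by omega) (by omega) (by omega)) (cast_ne (6 * m) (m - i) (m) (by omega) (by omega) (by omega)) (cast_ne (6 * m) (m - i) (2 * m) (by omega) (by omega) (by omega)) (cast_ne (6 * m) (m - i) (4 * m - i) (by omega) (by omega) (by omega)) (cast_ne (6 * m) (m) (2 * m) (by omega) (by omega) (by omega)) (cast_ne (6 * m) (m) (4 * m - i) (by omega) (by omega) (by omega)) (cast_ne (6 * m) (2 * m) (4 * m - i) (by omega) (by omega) (by omega))]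
    rw [cycDist_lt (6 * m) (0) (m - i) (by omega) (by omega),
      cycDist_lt (6 * m) (0) (m) (by omega) (by omega),
      cycDist_lt (6 * m) (0) (2 * m) (by omega) (by omega),
      cycDist_lt (6 * m) (0) (4 * m - i) (by omega) (by omega),
      cycDist_lt (6 * m) (m - i) (m) (by omega) (by omega),
      cycDist_lt (6 * m) (m - i) (2 * m) (by omega) (by omega),
      cycDist_lt (6 * m) (m - i) (4 * m - i) (by omega) (by omega),
      cycDist_lt (6 * m) (m) (2 * m) (by omega) (by omega),
      cycDist_lt (6 * m) (m) (4 * m - i) (by omega) (by omega),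
      cycDist_lt (6 * m) (2 * m) (4 * m - i) (by omega) (by omega)]
    have h20 : min (6 * m - ((m - i) - (0))) ((m - i) - (0)) = m - i := by omega
    have h21 : min (6 * m - ((m) - (0))) ((m) - (0)) = m := by omega
    have h22 : min (6 * m - ((2 * m) - (0))) ((2 * m) - (0)) = 2 * m := by omega
    have h23 : min (6 * m - ((4 * m - i) - (0))) ((4 * m - i) - (0)) = 2 * m + i := by omega
    have h24 : min (6 * m - ((m) - (m - i))) ((m) - (m - i)) = i := by omega
    have h25 : min (6 * m - ((2 * m) - (m - i))) ((2 * m) - (m - i)) = m + i := by omega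
    have h26 : min (6 * m - ((4 * m - i) - (m - i))) ((4 * m - i) - (m - i)) = 3 * m := by omega
    have h27 : min (6 * m - ((2 * m) - (m))) ((2 * m) - (m)) = m := by omega
    have h28 : min (6 * m - ((4 * m - i) - (m))) ((4 * m - i) - (m)) = 3 * m - i := by omega
    have h29 : min (6 * m - ((4 * m - i) - (2 * m))) ((4 * m - i) - (2 * m)) = 2 * m - i := by omega
    rw [h20, h21, h22, h23, h24, h25, h26, h27, h28, h29]
  refine ⟨?_, ?_, ?_, ?_, ?_, ?_⟩
  · rw [hS1]
    exact card_five _ _ _ _ _ (cast_ne (6 * m) (0) (i) (by omega) (by omega) (by omega)) (cast_ne (6 * m) (0) (m + i) (by omega) (by omega) (by omega)) (cast_ne (6 * m) (0) (2 * m + i) (by omega) (by omega) (by omega)) (cast_ne (6 * m) (0) (3 * m) (by omega) (by omega) (by omega)) (cast_ne (6 * m) (i) (m + i) (by omega) (by omega) (by omega)) (cast_ne (6 * m) (i) (2 * m + i) (by omega) (by omega) (by omega)) (cast_ne (6 * m) (i) (3 * m) (by omega) (by omega) (by omega)) (cast_ne (6 * m) (m + i) (2 * m + i) (by omega) (by omega)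 (by omega)) (cast_ne (6 * m) (m + i) (3 * m) (by omega) (by omega) (by omega)) (cast_ne (6 * m) (2 * m + i) (3 * m) (by omega) (by omega) (by omega))
  · rw [hS2]
    exact card_five _ _ _ _ _ (cast_ne (6 * m) (0) (i) (by omega) (by omega) (by omega)) (cast_ne (6 * m) (0) (m) (by omega) (by omega) (by omega)) (cast_ne (6 * m) (0) (2 * m) (by omega) (by omega) (by omega)) (cast_ne (6 * m) (0) (3 * m + i) (by omega) (by omega) (by omega)) (cast_ne (6 * m) (i) (m) (by omega) (by omega) (by omega)) (cast_ne (6 * m) (i) (2 * m) (by omega) (by omega) (by omega)) (cast_ne (6 * m) (i) (3 * m + i) (by omega) (by omega) (by omega)) (cast_ne (6 * m) (m) (2 * m) (by omega) (by omega) (by omega)) (cast_ne (6 * m) (m) (3 * m + i) (by omega) (by omega) (by omega)) (cast_ne (6 * m) (2 * m) (3 * m + i) (by omega) (by omega) (by omega))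
  · rw [hS3]
    exact card_five _ _ _ _ _ (cast_ne (6 * m) (0) (m - i) (by omega) (by omega) (by omega)) (cast_ne (6 * m) (0) (m) (by omega) (by omega) (by omega)) (cast_ne (6 * m) (0) (2 * m) (by omega) (by omega) (by omega)) (cast_ne (6 * m) (0) (4 * m - i) (by omega) (by omega) (by omega)) (cast_ne (6 * m) (m - i) (m) (by omega) (by omega) (by omega)) (cast_ne (6 * m) (m - i) (2 * m) (by omega) (by omega) (by omega)) (cast_ne (6 * m) (m - i) (4 * m - i) (by omega) (by omega) (by omega)) (cast_ne (6 * m) (m) (2 * m) (by omega) (by omega) (by omega)) (cast_ne (6 * m) (m) (4 * m - i) (by omega) (by omega) (by omega)) (cast_ne (6 * m) (2 * m) (4 * m - i) (by omega) (by omega) (by omega))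
  · unfold Homometric
    rw [hS1, hS2, eA, eB]
    simp only [Multiset.insert_eq_cons, ← Multiset.singleton_add]
    ac_rfl
  · unfold Homometric
    rw [hS2, hS3, eB, eC]
    simp only [Multiset.insert_eq_cons, ← Multiset.singleton_add]
    ac_rfl
  · unfold Homometric
    rw [hS1, hS3, eA, eC]
    simp only [Multiset.insert_eq_cons, ← Multiset.singleton_add]
    ac_rfl
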